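/- arXiv:1007.2140 — 5 statements merged into one kernel-verified Lean document; each statement's English description precedes it below -/
import Mathlib

section
/- Let f be a symmetric and crossing submodular function on a finite set V, and let I be a hereditary family of subsets of V. If X and Y are two distinct minimal optimal solutions of the hereditary minimization problem (nonempty sets in I minimizing f among nonempty sets of I, with no proper nonempty subset in I achieving the same minimum), then X and Y are disjoint. -/
/-!
Two distinct minimal optimal solutions `X`, `Y` have the same value and neither contains the
other. If they met, every nonempty proper subset of `X` or `Y` would have strictly larger value.
When `X ∪ Y ≠ V`, the sets `X` and `Yᶜ` cross, and crossing submodularity together with symmetry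
gives `f (X \ Y) + f (Y \ X) ≤ f X + f Y`, contradicting `f X < f (X \ Y)` and
`f Y < f (Y \ X)`. When `X ∪ Y = V`, the set `X \ Y` is `Yᶜ`, whose value is `f Y = f X`.
-/

section

open Finset

variable {α : Type*}

theorem Finset.sdiff_ssubset_of_inter_nonempty [DecidableEq α] {X Y : Finset α}
    (h : (X ∩ Y).Nonempty) : X \ Y ⊂ X := by
  rw [← sdiff_inter_self_left]
  exact sdiff_ssubset inter_subset_left h

theorem Finset.compl_eq_sdiff_of_compl_union_eq_empty [Fintype α] [DecidableEq α]
    {X Y : Finset α} (h : (X ∪ Y)ᶜ = ∅) : Yᶜ = X \ Y := by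
  have hcodis : Codisjoint X Y := codisjoint_iff.2 (compl_eq_bot.1 h)
  rw [sdiff_eq_inter_compl]
  exact (inter_eq_right.2 (codisjoint_iff_compl_le_left.1 hcodis)).symm

theorem posimodular_of_symm_of_crossing_submodular [Fintype α] [DecidableEq α]
    {f : Finset α → ℝ} (hsym : ∀ A : Finset α, f A = f Aᶜ)
    (hcross : ∀ A B : Finset α,
      (A \ B).Nonempty → (B \ A).Nonempty → (A ∩ B).Nonempty → ((A ∪ B)ᶜ).Nonempty →
      f (A ∪ B) + f (A ∩ B) ≤ f A + f B)
    {X Y : Finset α} (hXY : (X \ Y).Nonempty) (hYX : (Y \ X).Nonempty)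
    (hinter : (X ∩ Y).Nonempty) (hunion : ((X ∪ Y)ᶜ).Nonempty) :
    f (X \ Y) + f (Y \ X) ≤ f X + f Y := by
  have h₁ : X \ Yᶜ = X ∩ Y := sdiff_compl
  have h₂ : Yᶜ \ X = (X ∪ Y)ᶜ := by ext; simp; tauto
  have h₃ : X ∩ Yᶜ = X \ Y := (sdiff_eq_inter_compl X Y).symm
  have h₄ : (X ∪ Yᶜ)ᶜ = Y \ X := by ext; simp; tauto
  have hsubmod := hcross X Yᶜ (h₁ ▸ hinter) (h₂ ▸ hunion) (h₃ ▸ hXY) (h₄ ▸ hYX)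
  rw [h₃, ← compl_compl (X ∪ Yᶜ), h₄, ← hsym, ← hsym] at hsubmod
  linarith

variable (f : Finset α → ℝ) (I : Finset α → Prop)

def IsMinimalOptimal (X : Finset α) : Prop :=
  X.Nonempty ∧ I X ∧ (∀ A : Finset α, A.Nonempty → I A → f X ≤ f A) ∧
    (∀ Z : Finset α, Z.Nonempty → Z ⊂ X → I Z → f Z ≠ f X)

variable {f I} {X Y Z : Finset α}

theorem IsMinimalOptimal.value_eq (hX : IsMinimalOptimal f I X) (hY : IsMinimalOptimal f I Y) :
    f X = f Y :=
  le_antisymm (hX.2.2.1 Y hY.1 hY.2.1) (hY.2.2.1 X hX.1 hX.2.1)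

theorem IsMinimalOptimal.lt_of_ssubset (hhered : ∀ A B : Finset α, I B → A ⊆ B → I A)
    (hX : IsMinimalOptimal f I X) (hZ : Z.Nonempty) (hZX : Z ⊂ X) : f X < f Z := by
  have hZI : I Z := hhered Z X hX.2.1 hZX.subset
  exact (hX.2.2.1 Z hZ hZI).lt_of_ne (hX.2.2.2 Z hZ hZX hZI).symm

theorem IsMinimalOptimal.eq_of_subset (hX : IsMinimalOptimal f I X)
    (hY : IsMinimalOptimal f I Y) (hXY : X ⊆ Y) : X = Y := by
  by_contra hne
  exact hY.2.2.2 X hX.1 (ssubset_of_ne_of_subset hne hXY) hX.2.1 (hX.value_eq hY)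

end

/-- Minimal optimal solutions of the hereditary minimization problem are disjoint. -/
theorem minimal_optimal_solutions_disjoint
    {α : Type*} [Fintype α] [DecidableEq α] (f : Finset α → ℝ)
    (I : Finset α → Prop)
    (hsym : ∀ A : Finset α, f A = f Aᶜ)
    (hcross : ∀ A B : Finset α,
      (A \ B).Nonempty → (B \ A).Nonempty → (A ∩ B).Nonempty → ((A ∪ B)ᶜ).Nonempty →
      f (A ∪ B) + f (A ∩ B) ≤ f A + f B)
    (hhered : ∀ A B : Finset α, I B → A ⊆ B → I A)
    (X Y : Finset α)
    (hX : X.Nonempty ∧ I X ∧ (∀ A : Finset α, A.Nonempty → I A → f X ≤ f A) ∧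
      (∀ Z : Finset α, Z.Nonempty → Z ⊂ X → I Z → f Z ≠ f X))
    (hY : Y.Nonempty ∧ I Y ∧ (∀ A : Finset α, A.Nonempty → I A → f Y ≤ f A) ∧
      (∀ Z : Finset α, Z.Nonempty → Z ⊂ Y → I Z → f Z ≠ f Y))
    (hXY : X ≠ Y) :
    Disjoint X Y := by
  replace hX : IsMinimalOptimal f I X := hX
  replace hY : IsMinimalOptimal f I Y := hY
  rw [Finset.disjoint_iff_inter_eq_empty, ← Finset.not_nonempty_iff_eq_empty]
  intro hinter
  have hXdY : (X \ Y).Nonempty := Finset.sdiff_nonempty.2 fun h => hXY (hX.eq_of_subset hY h)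
  have hYdX : (Y \ X).Nonempty := Finset.sdiff_nonempty.2 fun h => hXY (hY.eq_of_subset hX h).symm
  have hlt_X : f X < f (X \ Y) :=
    hX.lt_of_ssubset hhered hXdY (Finset.sdiff_ssubset_of_inter_nonempty hinter)
  have hlt_Y : f Y < f (Y \ X) :=
    hY.lt_of_ssubset hhered hYdX
      (Finset.sdiff_ssubset_of_inter_nonempty (Finset.inter_comm X Y ▸ hinter))
  rcases (X ∪ Y)ᶜ.eq_empty_or_nonempty with hcover | hunion
  · have hfY := hsym Y
    rw [Finset.compl_eq_sdiff_of_compl_union_eq_empty hcover] at hfY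
    linarith [hX.value_eq hY]
  · linarith [posimodular_of_symm_of_crossing_submodular hsym hcross hXdY hYdX hinter hunion]
end

section
/- Let (V, f, I) be a hereditary submodular system with f symmetric and crossing submodular, let t ∈ V and t ∈ L ⊆ V with L ≠ V. Define V' = (V \ L) ∪ {t}, f'(X) = f(X) if t ∉ X and f'(X) = f(X ∪ L) if t ∈ X ⊆ V'. Then f' is crossing submodular and symmetric on V'. -/
/-!
Contracting `L` into `t` is undone by `uncontract t L`, which sends `X ⊆ V'` to `X ∪ L` when
`t ∈ X` and to `X` otherwise, so that `f' = f ∘ uncontract t L` on subsets of `V'`. On these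
subsets `uncontract` commutes with unions, intersections and complements (`V' \ X ↦ Xᶜ`), and it
only adds points outside `V'`; hence it maps pairs crossing in `V'` to pairs crossing in the whole
type, and both properties of `f` transfer to `f'`.
-/

namespace Finset

variable {α : Type*} [DecidableEq α]

def uncontract (t : α) (L X : Finset α) : Finset α := if t ∈ X then X ∪ L else X

variable (t : α) (L : Finset α)

lemma subset_uncontract (X : Finset α) : X ⊆ uncontract t L X := by
  unfold uncontract; split_ifs <;> simp

lemma uncontract_union (A B : Finset α) :
    uncontract t L (A ∪ B) = uncontract t L A ∪ uncontract t L B := by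
  unfold uncontract; split_ifs <;> ext <;> simp_all <;> tauto

variable [Fintype α] {t L}

lemma uncontract_inter {A B : Finset α} (hA : A ⊆ Lᶜ ∪ {t}) (hB : B ⊆ Lᶜ ∪ {t}) :
    uncontract t L (A ∩ B) = uncontract t L A ∩ uncontract t L B := by
  unfold uncontract; split_ifs <;> ext a <;> have := @hA a <;> have := @hB a <;> simp_all <;> grind

lemma uncontract_inter_ground {X : Finset α} (hX : X ⊆ Lᶜ ∪ {t}) :
    uncontract t L X ∩ (Lᶜ ∪ {t}) = X := by
  unfold uncontract; split_ifs <;> ext a <;> have := @hX a <;> simp_all <;> grind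

lemma uncontract_ground_sdiff {X : Finset α} (hX : X ⊆ Lᶜ ∪ {t}) :
    uncontract t L ((Lᶜ ∪ {t}) \ X) = (uncontract t L X)ᶜ := by
  unfold uncontract; split_ifs <;> ext a <;> have := @hX a <;> simp_all <;> grind

lemma sdiff_subset_uncontract_sdiff {A B : Finset α} (hA : A ⊆ Lᶜ ∪ {t})
    (hB : B ⊆ Lᶜ ∪ {t}) : A \ B ⊆ uncontract t L A \ uncontract t L B := by
  intro a ha
  rw [mem_sdiff] at ha ⊢
  refine ⟨subset_uncontract t L A ha.1, fun haB => ha.2 ?_⟩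
  rw [← uncontract_inter_ground hB]
  exact mem_inter.2 ⟨haB, hA ha.1⟩

end Finset

theorem contraction_preserves_symmetric_crossing_submodular_general
    {α : Type*} [Fintype α] [DecidableEq α] (f : Finset α → ℝ)
    (hsym : ∀ A : Finset α, f A = f Aᶜ)
    (hcross : ∀ A B : Finset α,
      (A \ B).Nonempty → (B \ A).Nonempty → (A ∩ B).Nonempty → ((A ∪ B)ᶜ).Nonempty →
      f (A ∪ B) + f (A ∩ B) ≤ f A + f B)
    (t : α) (L : Finset α)
    (V' : Finset α) (hV' : V' = Lᶜ ∪ {t})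
    (f' : Finset α → ℝ)
    (hf' : ∀ X : Finset α, X ⊆ V' → f' X = if t ∈ X then f (X ∪ L) else f X) :
    (∀ X : Finset α, X ⊆ V' → f' X = f' (V' \ X)) ∧
    (∀ A B : Finset α, A ⊆ V' → B ⊆ V' →
      (A \ B).Nonempty → (B \ A).Nonempty → (A ∩ B).Nonempty → (V' \ (A ∪ B)).Nonempty →
      f' (A ∪ B) + f' (A ∩ B) ≤ f' A + f' B) := by
  subst hV'
  have hf'_eq : ∀ X, X ⊆ Lᶜ ∪ {t} → f' X = f (Finset.uncontract t L X) := fun X hX =>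
    (hf' X hX).trans (apply_ite f _ _ _).symm
  refine ⟨fun X hX => ?_, fun A B hA hB hAB hBA hI hC => ?_⟩
  · rw [hf'_eq X hX, hf'_eq _ Finset.sdiff_subset, Finset.uncontract_ground_sdiff hX, ← hsym]
  have hAuB := Finset.union_subset hA hB
  rw [hf'_eq _ hAuB, hf'_eq _ (Finset.inter_subset_left.trans hA), hf'_eq A hA, hf'_eq B hB,
    Finset.uncontract_union, Finset.uncontract_inter hA hB]
  refine hcross _ _ (hAB.mono (Finset.sdiff_subset_uncontract_sdiff hA hB))
    (hBA.mono (Finset.sdiff_subset_uncontract_sdiff hB hA))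
    (hI.mono (Finset.inter_subset_inter (Finset.subset_uncontract t L A)
      (Finset.subset_uncontract t L B))) ?_
  rw [← Finset.uncontract_union, ← Finset.uncontract_ground_sdiff hAuB]
  exact hC.mono (Finset.subset_uncontract t L _)

/-- Contraction of a set `L` into `t` preserves symmetry and crossing submodularity. -/
theorem contraction_preserves_symmetric_crossing_submodular
    {α : Type*} [Fintype α] [DecidableEq α] (f : Finset α → ℝ)
    (hsym : ∀ A : Finset α, f A = f Aᶜ)
    (hcross : ∀ A B : Finset α,
      (A \ B).Nonempty → (B \ A).Nonempty → (A ∩ B).Nonempty → ((A ∪ B)ᶜ).Nonempty →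
      f (A ∪ B) + f (A ∩ B) ≤ f A + f B)
    (t : α) (L : Finset α) (htL : t ∈ L) (hL : L ≠ Finset.univ)
    (V' : Finset α) (hV' : V' = Lᶜ ∪ {t})
    (f' : Finset α → ℝ)
    (hf' : ∀ X : Finset α, X ⊆ V' → f' X = if t ∈ X then f (X ∪ L) else f X) :
    (∀ X : Finset α, X ⊆ V' → f' X = f' (V' \ X)) ∧
    (∀ A B : Finset α, A ⊆ V' → B ⊆ V' →
      (A \ B).Nonempty → (B \ A).Nonempty → (A ∩ B).Nonempty → (V' \ (A ∪ B)).Nonempty →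
      f' (A ∪ B) + f' (A ∩ B) ≤ f' A + f' B) :=
  contraction_preserves_symmetric_crossing_submodular_general f hsym hcross t L V' hV' f' hf'
end

section
/- Let d be a symmetric, monotone and consistent map on pairs of disjoint subsets of a finite set V, and define f(S) = d(S, V \ S) for nonempty proper S ⊂ V. Let I be a hereditary family on V. Then any two minimal minimizers of f over nonempty sets in I are disjoint. -/
/-!
Write `A = X \ Y`, `B = Y \ X`, `C = X ∩ Y` and suppose `C` is nonempty. Consistency applied to
`Xᶜ`, `A` and `C` shows that `d Xᶜ C ≥ d A C` would give `f A ≤ f X`, impossible since `A` is a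
proper subset of the minimal minimizer `X`; so `d Xᶜ C < d A C`, and symmetrically
`d Yᶜ C < d B C`. But `B ⊆ Xᶜ` and `A ⊆ Yᶜ`, so monotonicity gives
`d A C < d B C ≤ d Xᶜ C < d A C`.
-/

open Finset

theorem Finset.sdiff_subset_compl {α : Type*} [Fintype α] [DecidableEq α] (s t : Finset α) :
    s \ t ⊆ tᶜ :=
  fun _ ha => mem_compl.mpr (mem_sdiff.mp ha).2

section DisjointPairMap

variable {α : Type*} [DecidableEq α] (d : Finset α → Finset α → ℝ)

def SymmOnDisjoint : Prop :=
  ∀ A B : Finset α, Disjoint A B → A.Nonempty → B.Nonempty → d A B = d B A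

def MonotoneOnDisjoint : Prop :=
  ∀ A B W : Finset α, Disjoint A B → Disjoint A W → Disjoint B W →
    A.Nonempty → B.Nonempty → W.Nonempty → d A B ≤ d A (B ∪ W)

def ConsistentOnDisjoint : Prop :=
  ∀ A B W : Finset α, Disjoint A B → Disjoint A W → Disjoint B W →
    A.Nonempty → B.Nonempty → W.Nonempty →
    d A W ≥ d B W → d A (W ∪ B) ≥ d B (W ∪ A)

variable {d}

theorem MonotoneOnDisjoint.le_of_subset_left (hmono : MonotoneOnDisjoint d)
    (hsym : SymmOnDisjoint d) {B B' C : Finset α} (hBB' : B ⊆ B') (hB'C : Disjoint B' C)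
    (hB : B.Nonempty) (hC : C.Nonempty) : d B C ≤ d B' C := by
  rcases (B' \ B).eq_empty_or_nonempty with hempty | hdiff
  · rw [hBB'.antisymm (sdiff_eq_empty_iff_subset.mp hempty)]
  have hBC : Disjoint B C := hB'C.mono_left hBB'
  calc d B C = d C B := hsym B C hBC hB hC
    _ ≤ d C (B ∪ (B' \ B)) :=
        hmono C B (B' \ B) hBC.symm (hB'C.symm.mono_right sdiff_subset) disjoint_sdiff hC hB hdiff
    _ = d B' C := by
        rw [union_sdiff_of_subset hBB']
        exact hsym C B' hB'C.symm hC (hB.mono hBB')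

theorem ConsistentOnDisjoint.le_compl_of_subset [Fintype α] (hcons : ConsistentOnDisjoint d)
    (hsym : SymmOnDisjoint d) {S X : Finset α} (hSX : S ⊆ X) (hS : S.Nonempty)
    (hXS : (X \ S).Nonempty) (hXc : Xᶜ.Nonempty) (h : d S (X \ S) ≤ d Xᶜ (X \ S)) :
    d S Sᶜ ≤ d X Xᶜ := by
  have hcompl : X \ S ∪ Xᶜ = Sᶜ := by
    ext a
    have := @hSX a
    simp only [mem_union, mem_sdiff, mem_compl]
    tauto
  have key := hcons Xᶜ S (X \ S) (disjoint_compl_left.mono_right hSX)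
    (disjoint_compl_left.mono_right sdiff_subset) disjoint_sdiff hXc hS hXS h
  rwa [sdiff_union_of_subset hSX, hcompl,
    hsym Xᶜ X disjoint_compl_left hXc (hXS.mono sdiff_subset)] at key

end DisjointPairMap

def IsMinimalMinimizer {α : Type*} (I : Finset α → Prop) (f : Finset α → ℝ) (X : Finset α) : Prop :=
  X.Nonempty ∧ I X ∧ (∀ A : Finset α, A.Nonempty → I A → f X ≤ f A) ∧
    (∀ Z : Finset α, Z.Nonempty → Z ⊂ X → I Z → f Z ≠ f X)

namespace IsMinimalMinimizer

variable {α : Type*} {I : Finset α → Prop} {f : Finset α → ℝ} {X Y : Finset α}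

theorem eq_of_subset (hX : IsMinimalMinimizer I f X) (hY : IsMinimalMinimizer I f Y)
    (hXY : X ⊆ Y) : X = Y := by
  by_contra hne
  exact hY.2.2.2 X hX.1 (hXY.ssubset_of_ne hne) hX.2.1
    (le_antisymm (hX.2.2.1 Y hY.1 hY.2.1) (hY.2.2.1 X hX.1 hX.2.1))

theorem lt_of_ssubset (hX : IsMinimalMinimizer I f X)
    (hhered : ∀ A B : Finset α, I B → A ⊆ B → I A)
    {S : Finset α} (hS : S.Nonempty) (hSX : S ⊂ X) : f X < f S := by
  have hSI : I S := hhered S X hX.2.1 hSX.subset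
  exact lt_of_le_of_ne (hX.2.2.1 S hS hSI) (hX.2.2.2 S hS hSX hSI).symm

theorem compl_inter_lt_sdiff_inter [DecidableEq α] [Fintype α] {d : Finset α → Finset α → ℝ}
    (hX : IsMinimalMinimizer I f X) (hhered : ∀ A B : Finset α, I B → A ⊆ B → I A)
    (hsym : SymmOnDisjoint d) (hcons : ConsistentOnDisjoint d)
    (hf : ∀ S : Finset α, S.Nonempty → Sᶜ.Nonempty → f S = d S Sᶜ)
    (hXY : (X \ Y).Nonempty) (hYX : (Y \ X).Nonempty) (hC : (X ∩ Y).Nonempty) :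
    d Xᶜ (X ∩ Y) < d (X \ Y) (X ∩ Y) := by
  rw [← sdiff_sdiff_self_left] at hC ⊢
  by_contra! h
  have hXc : Xᶜ.Nonempty := hYX.mono (sdiff_subset_compl Y X)
  have hSc : (X \ Y)ᶜ.Nonempty := hC.mono (sdiff_subset_compl _ _)
  have hSX : X \ Y ⊂ X := (ssubset_iff_of_subset sdiff_subset).mpr <| by
    obtain ⟨c, hc⟩ := hC
    exact ⟨c, mem_sdiff.mp hc⟩
  have hlt := hX.lt_of_ssubset hhered hXY hSX
  rw [hf X hX.1 hXc, hf _ hXY hSc] at hlt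
  exact (hcons.le_compl_of_subset hsym sdiff_subset hXY hC hXc h).not_gt hlt

end IsMinimalMinimizer

/-- For a symmetric, monotone and consistent map `d`, minimal minimizers of
`f S = d S Sᶜ` over nonempty members of a hereditary family are disjoint. -/
theorem minimal_minimizers_of_consistent_map_disjoint
    {α : Type*} [Fintype α] [DecidableEq α]
    (d : Finset α → Finset α → ℝ)
    (hdsym : ∀ A B : Finset α, Disjoint A B → A.Nonempty → B.Nonempty → d A B = d B A)
    (hmono : ∀ A B W : Finset α, Disjoint A B → Disjoint A W → Disjoint B W →
      A.Nonempty → B.Nonempty → W.Nonempty → d A B ≤ d A (B ∪ W))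
    (hcons : ∀ A B W : Finset α, Disjoint A B → Disjoint A W → Disjoint B W →
      A.Nonempty → B.Nonempty → W.Nonempty →
      d A W ≥ d B W → d A (W ∪ B) ≥ d B (W ∪ A))
    (I : Finset α → Prop)
    (hhered : ∀ A B : Finset α, I B → A ⊆ B → I A)
    (f : Finset α → ℝ)
    (hf : ∀ S : Finset α, S.Nonempty → Sᶜ.Nonempty → f S = d S Sᶜ)
    (X Y : Finset α)
    (hX : X.Nonempty ∧ I X ∧ (∀ A : Finset α, A.Nonempty → I A → f X ≤ f A) ∧
      (∀ Z : Finset α, Z.Nonempty → Z ⊂ X → I Z → f Z ≠ f X))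
    (hY : Y.Nonempty ∧ I Y ∧ (∀ A : Finset α, A.Nonempty → I A → f Y ≤ f A) ∧
      (∀ Z : Finset α, Z.Nonempty → Z ⊂ Y → I Z → f Z ≠ f Y))
    (hXY : X ≠ Y) :
    Disjoint X Y := by
  have hXmin : IsMinimalMinimizer I f X := hX
  have hYmin : IsMinimalMinimizer I f Y := hY
  by_contra hXYmeet
  have hC : (X ∩ Y).Nonempty := not_disjoint_iff_nonempty_inter.mp hXYmeet
  have hXdiff : (X \ Y).Nonempty := sdiff_nonempty.mpr fun h => hXY (hXmin.eq_of_subset hYmin h)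
  have hYdiff : (Y \ X).Nonempty :=
    sdiff_nonempty.mpr fun h => hXY (hYmin.eq_of_subset hXmin h).symm
  have hXcut := hXmin.compl_inter_lt_sdiff_inter hhered hdsym hcons hf hXdiff hYdiff hC
  have hYcut := hYmin.compl_inter_lt_sdiff_inter hhered hdsym hcons hf hYdiff hXdiff
    (by rwa [inter_comm])
  rw [inter_comm] at hYcut
  have hYX_le : d (Y \ X) (X ∩ Y) ≤ d Xᶜ (X ∩ Y) :=
    MonotoneOnDisjoint.le_of_subset_left hmono hdsym (sdiff_subset_compl Y X)
      (disjoint_compl_left.mono_right inter_subset_left) hYdiff hC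
  have hXY_le : d (X \ Y) (X ∩ Y) ≤ d Yᶜ (X ∩ Y) :=
    MonotoneOnDisjoint.le_of_subset_left hmono hdsym (sdiff_subset_compl X Y)
      (disjoint_compl_left.mono_right inter_subset_right) hXdiff hC
  linarith
end

section
/- Let f be a symmetric crossing submodular function on V. Then the function d defined on pairs of disjoint nonempty subsets by d(A,B) = (1/2)(f(A) + f(B) − f(A ∪ B)) is symmetric and, whenever A, B, W are pairwise disjoint nonempty subsets with A ∪ B ∪ W ≠ V, monotone: d(A,B) ≤ d(A, B ∪ W). -/
namespace Finset

variable {α : Type*} [DecidableEq α]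

theorem union_inter_union_eq_of_disjoint {A B W : Finset α} (hAW : Disjoint A W) :
    (A ∪ B) ∩ (B ∪ W) = B := by
  rw [union_comm A, ← union_inter_distrib_left, disjoint_iff_inter_eq_empty.mp hAW, union_empty]

theorem sdiff_union_nonempty_of_disjoint {A B C : Finset α} (hA : A.Nonempty)
    (hAC : Disjoint A C) : ((A ∪ B) \ C).Nonempty :=
  hA.mono fun _ ha => mem_sdiff.mpr ⟨mem_union_left B ha, disjoint_left.mp hAC ha⟩

theorem compl_nonempty_of_ne_univ [Fintype α] {S : Finset α} (hS : S ≠ univ) : Sᶜ.Nonempty :=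
  nonempty_iff_ne_empty.mpr fun h => hS (compl_eq_empty_iff S |>.mp h)

end Finset

open Finset

-- `A ∪ B` and `B ∪ W` cross, with intersection `B` and union `A ∪ B ∪ W`.
theorem crossingSubmodular_union_union {α : Type*} [Fintype α] [DecidableEq α]
    {f : Finset α → ℝ}
    (hcross : ∀ A B : Finset α,
      (A \ B).Nonempty → (B \ A).Nonempty → (A ∩ B).Nonempty → ((A ∪ B)ᶜ).Nonempty →
      f (A ∪ B) + f (A ∩ B) ≤ f A + f B)
    {A B W : Finset α} (hAB : Disjoint A B) (hAW : Disjoint A W) (hBW : Disjoint B W)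
    (hA : A.Nonempty) (hB : B.Nonempty) (hW : W.Nonempty) (hne : A ∪ B ∪ W ≠ univ) :
    f (A ∪ B ∪ W) + f B ≤ f (A ∪ B) + f (B ∪ W) := by
  have hunion : (A ∪ B) ∪ (B ∪ W) = A ∪ B ∪ W := by
    rw [← union_assoc, union_assoc A B B, union_self]
  have key := hcross (A ∪ B) (B ∪ W)
    (sdiff_union_nonempty_of_disjoint hA (disjoint_union_right.mpr ⟨hAB, hAW⟩))
    (union_comm B W ▸ sdiff_union_nonempty_of_disjoint hW
      (disjoint_union_right.mpr ⟨hAW.symm, hBW.symm⟩))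
    (by rwa [union_inter_union_eq_of_disjoint hAW])
    (compl_nonempty_of_ne_univ (hunion ▸ hne))
  rwa [hunion, union_inter_union_eq_of_disjoint hAW] at key

theorem induced_map_symmetric_monotone_general
    {α : Type*} [Fintype α] [DecidableEq α] (f : Finset α → ℝ)
    (hcross : ∀ A B : Finset α,
      (A \ B).Nonempty → (B \ A).Nonempty → (A ∩ B).Nonempty → ((A ∪ B)ᶜ).Nonempty →
      f (A ∪ B) + f (A ∩ B) ≤ f A + f B)
    (d : Finset α → Finset α → ℝ)
    (hd : ∀ A B : Finset α, d A B = (f A + f B - f (A ∪ B)) / 2) :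
    (∀ A B : Finset α, Disjoint A B → A.Nonempty → B.Nonempty → d A B = d B A) ∧
    (∀ A B W : Finset α, Disjoint A B → Disjoint A W → Disjoint B W →
      A.Nonempty → B.Nonempty → W.Nonempty → A ∪ B ∪ W ≠ Finset.univ →
      d A B ≤ d A (B ∪ W)) := by
  refine ⟨fun A B _ _ _ => ?_, fun A B W hAB hAW hBW hA hB hW hne => ?_⟩
  · rw [hd, hd, union_comm]
    ring
  · have := crossingSubmodular_union_union hcross hAB hAW hBW hA hB hW hne
    rw [hd, hd, ← union_assoc]
    linarith

/-- From a symmetric crossing submodular function `f`, the map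
`d A B = (f A + f B - f (A ∪ B)) / 2` is symmetric and monotone. -/
theorem induced_map_symmetric_monotone
    {α : Type*} [Fintype α] [DecidableEq α] (f : Finset α → ℝ)
    (hsym : ∀ A : Finset α, f A = f Aᶜ)
    (hcross : ∀ A B : Finset α,
      (A \ B).Nonempty → (B \ A).Nonempty → (A ∩ B).Nonempty → ((A ∪ B)ᶜ).Nonempty →
      f (A ∪ B) + f (A ∩ B) ≤ f A + f B)
    (d : Finset α → Finset α → ℝ)
    (hd : ∀ A B : Finset α, d A B = (f A + f B - f (A ∪ B)) / 2) :
    (∀ A B : Finset α, Disjoint A B → A.Nonempty → B.Nonempty → d A B = d B A) ∧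
    (∀ A B W : Finset α, Disjoint A B → Disjoint A W → Disjoint B W →
      A.Nonempty → B.Nonempty → W.Nonempty → A ∪ B ∪ W ≠ Finset.univ →
      d A B ≤ d A (B ∪ W)) :=
  induced_map_symmetric_monotone_general f hcross d hd
end

section
/- Let f be an intersecting submodular and intersecting posimodular function on V, let s ∉ V, and define the antirestriction g on V ∪ {s} by g(X) = f(X) if s ∉ X and g(X) = f(V \ (X \ {s})) if s ∈ X. Then g is crossing submodular on V ∪ {s}. -/
/-!
Write `W = V ∪ {s}`. Off `s`, `g` is `f`; on sets containing `s` it is `f` of the complement in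
`W`. Sort a crossing pair `A, B ⊆ W` by where `s` lies. If `s ∉ A ∪ B`, apply submodularity of
`f` to `A, B`. If `s ∈ A ∩ B`, the complements `W \ A, W \ B` lie in `V` and intersect, because
`A, B` cross; complementation swaps `∪` and `∩`, so submodularity of `f` for the complements
is the claim. If `s ∈ A \ B`, posimodularity of `f` for `W \ A` and `B` is the claim, since
`(W \ A) \ B = W \ (A ∪ B)` and `B \ (W \ A) = A ∩ B`.
-/

section

variable {α : Type*} [DecidableEq α]

def IntersectingSubmodularOn (V : Finset α) (f : Finset α → ℝ) : Prop :=
  ∀ A B : Finset α, A ⊆ V → B ⊆ V →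
    (A \ B).Nonempty → (B \ A).Nonempty → (A ∩ B).Nonempty →
    f (A ∪ B) + f (A ∩ B) ≤ f A + f B

def IntersectingPosimodularOn (V : Finset α) (f : Finset α → ℝ) : Prop :=
  ∀ A B : Finset α, A ⊆ V → B ⊆ V →
    (A \ B).Nonempty → (B \ A).Nonempty → (A ∩ B).Nonempty →
    f (A \ B) + f (B \ A) ≤ f A + f B

def IsAntirestriction (V : Finset α) (s : α) (f g : Finset α → ℝ) : Prop :=
  ∀ X : Finset α, X ⊆ V ∪ {s} → g X = if s ∈ X then f (V \ (X \ {s})) else f X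

variable {V A B X : Finset α} {s : α} {f g : Finset α → ℝ}

lemma union_singleton_sdiff_subset_of_mem (hsX : s ∈ X) : (V ∪ {s}) \ X ⊆ V := by
  intro x hx
  grind

lemma subset_of_subset_union_singleton_of_notMem (hX : X ⊆ V ∪ {s}) (hsX : s ∉ X) : X ⊆ V := by
  intro x hx
  grind

namespace IsAntirestriction

lemma eq_of_mem (hg : IsAntirestriction V s f g) (hs : s ∉ V) (hX : X ⊆ V ∪ {s})
    (hsX : s ∈ X) : g X = f ((V ∪ {s}) \ X) := by
  rw [hg X hX, if_pos hsX]
  congr 1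
  grind

lemma eq_of_notMem (hg : IsAntirestriction V s f g) (hX : X ⊆ V ∪ {s}) (hsX : s ∉ X) :
    g X = f X := by
  rw [hg X hX, if_neg hsX]

lemma submodular_of_notMem_of_notMem (hg : IsAntirestriction V s f g)
    (hsub : IntersectingSubmodularOn V f) (hA : A ⊆ V ∪ {s}) (hB : B ⊆ V ∪ {s})
    (hsA : s ∉ A) (hsB : s ∉ B) (hAB : (A \ B).Nonempty) (hBA : (B \ A).Nonempty)
    (hAiB : (A ∩ B).Nonempty) :
    g (A ∪ B) + g (A ∩ B) ≤ g A + g B := by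
  rw [hg.eq_of_notMem (Finset.union_subset hA hB) (by simp [hsA, hsB]),
    hg.eq_of_notMem (Finset.inter_subset_left.trans hA) (by simp [hsA]),
    hg.eq_of_notMem hA hsA, hg.eq_of_notMem hB hsB]
  exact hsub A B (subset_of_subset_union_singleton_of_notMem hA hsA)
    (subset_of_subset_union_singleton_of_notMem hB hsB) hAB hBA hAiB

lemma submodular_of_mem_of_mem (hg : IsAntirestriction V s f g) (hs : s ∉ V)
    (hsub : IntersectingSubmodularOn V f) (hA : A ⊆ V ∪ {s}) (hB : B ⊆ V ∪ {s})
    (hsA : s ∈ A) (hsB : s ∈ B) (hAB : (A \ B).Nonempty) (hBA : (B \ A).Nonempty)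
    (hout : ((V ∪ {s}) \ (A ∪ B)).Nonempty) :
    g (A ∪ B) + g (A ∩ B) ≤ g A + g B := by
  rw [hg.eq_of_mem hs (Finset.union_subset hA hB) (Finset.mem_union_left _ hsA),
    hg.eq_of_mem hs (Finset.inter_subset_left.trans hA) (Finset.mem_inter.mpr ⟨hsA, hsB⟩),
    hg.eq_of_mem hs hA hsA, hg.eq_of_mem hs hB hsB, Finset.sdiff_union_distrib,
    Finset.sdiff_inter_distrib_right, add_comm]
  refine hsub _ _ (union_singleton_sdiff_subset_of_mem hsA)
    (union_singleton_sdiff_subset_of_mem hsB) ?_ ?_ (by rwa [← Finset.sdiff_union_distrib])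
  · rwa [sdiff_sdiff_sdiff_cancel_left hB]
  · rwa [sdiff_sdiff_sdiff_cancel_left hA]

lemma submodular_of_mem_of_notMem (hg : IsAntirestriction V s f g) (hs : s ∉ V)
    (hposi : IntersectingPosimodularOn V f) (hA : A ⊆ V ∪ {s}) (hB : B ⊆ V ∪ {s})
    (hsA : s ∈ A) (hsB : s ∉ B) (hBA : (B \ A).Nonempty) (hAiB : (A ∩ B).Nonempty)
    (hout : ((V ∪ {s}) \ (A ∪ B)).Nonempty) :
    g (A ∪ B) + g (A ∩ B) ≤ g A + g B := by
  have hdiff : ((V ∪ {s}) \ A) \ B = (V ∪ {s}) \ (A ∪ B) := sdiff_sdiff_left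
  have hinter : B \ ((V ∪ {s}) \ A) = A ∩ B := by grind
  have hcross : (V ∪ {s}) \ A ∩ B = B \ A := by grind
  rw [hg.eq_of_mem hs (Finset.union_subset hA hB) (Finset.mem_union_left _ hsA),
    hg.eq_of_notMem (Finset.inter_subset_left.trans hA) (by simp [hsB]),
    hg.eq_of_mem hs hA hsA, hg.eq_of_notMem hB hsB, ← hdiff, ← hinter]
  exact hposi _ B (union_singleton_sdiff_subset_of_mem hsA)
    (subset_of_subset_union_singleton_of_notMem hB hsB) (hdiff ▸ hout) (hinter ▸ hAiB)
    (hcross ▸ hBA)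

end IsAntirestriction

end

theorem antirestriction_crossing_submodular_general
    {α : Type*} [DecidableEq α]
    (V : Finset α) (s : α) (hs : s ∉ V)
    (f : Finset α → ℝ)
    (hsub : ∀ A B : Finset α, A ⊆ V → B ⊆ V →
      (A \ B).Nonempty → (B \ A).Nonempty → (A ∩ B).Nonempty →
      f (A ∪ B) + f (A ∩ B) ≤ f A + f B)
    (hposi : ∀ A B : Finset α, A ⊆ V → B ⊆ V →
      (A \ B).Nonempty → (B \ A).Nonempty → (A ∩ B).Nonempty →
      f (A \ B) + f (B \ A) ≤ f A + f B)
    (g : Finset α → ℝ)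
    (hg : ∀ X : Finset α, X ⊆ V ∪ {s} →
      g X = if s ∈ X then f (V \ (X \ {s})) else f X) :
    ∀ A B : Finset α, A ⊆ V ∪ {s} → B ⊆ V ∪ {s} →
      (A \ B).Nonempty → (B \ A).Nonempty → (A ∩ B).Nonempty →
      ((V ∪ {s}) \ (A ∪ B)).Nonempty →
      g (A ∪ B) + g (A ∩ B) ≤ g A + g B := by
  have hanti : IsAntirestriction V s f g := hg
  intro A B hA hB hAB hBA hAiB hout
  by_cases hsA : s ∈ A <;> by_cases hsB : s ∈ B
  · exact hanti.submodular_of_mem_of_mem hs hsub hA hB hsA hsB hAB hBA hout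
  · exact hanti.submodular_of_mem_of_notMem hs hposi hA hB hsA hsB hBA hAiB hout
  · have := hanti.submodular_of_mem_of_notMem hs hposi hB hA hsB hsA hAB
      (by rwa [Finset.inter_comm]) (by rwa [Finset.union_comm B A])
    rw [Finset.union_comm, Finset.inter_comm]
    linarith
  · exact hanti.submodular_of_notMem_of_notMem hsub hA hB hsA hsB hAB hBA hAiB

/-- The antirestriction `g` of an intersecting submodular and intersecting
posimodular function `f` is crossing submodular on `V ∪ {s}`. -/
theorem antirestriction_crossing_submodular
    {α : Type*} [Fintype α] [DecidableEq α]
    (V : Finset α) (s : α) (hs : s ∉ V)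
    (f : Finset α → ℝ)
    (hsub : ∀ A B : Finset α, A ⊆ V → B ⊆ V →
      (A \ B).Nonempty → (B \ A).Nonempty → (A ∩ B).Nonempty →
      f (A ∪ B) + f (A ∩ B) ≤ f A + f B)
    (hposi : ∀ A B : Finset α, A ⊆ V → B ⊆ V →
      (A \ B).Nonempty → (B \ A).Nonempty → (A ∩ B).Nonempty →
      f (A \ B) + f (B \ A) ≤ f A + f B)
    (g : Finset α → ℝ)
    (hg : ∀ X : Finset α, X ⊆ V ∪ {s} →
      g X = if s ∈ X then f (V \ (X \ {s})) else f X) :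
    ∀ A B : Finset α, A ⊆ V ∪ {s} → B ⊆ V ∪ {s} →
      (A \ B).Nonempty → (B \ A).Nonempty → (A ∩ B).Nonempty →
      ((V ∪ {s}) \ (A ∪ B)).Nonempty →
      g (A ∪ B) + g (A ∩ B) ≤ g A + g B :=
  antirestriction_crossing_submodular_general V s hs f hsub hposi g hg
end
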